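/- arXiv:1705.08352 — 6 statements merged into one kernel-verified Lean document; each statement's English description precedes it below -/
import Mathlib

section
/- For a torsion-free connection on an m-dimensional manifold given in local coordinates by Christoffel symbols Γᵢⱼᵏ, the Ricci tensor is ρⱼₖ = ∂ᵢΓⱼₖⁱ - ∂ⱼΓᵢₖⁱ + Γᵢₙⁱ Γⱼₖⁿ - Γⱼₙⁱ Γᵢₖⁿ. If Γ̃ᵢⱼᵏ = Γᵢⱼᵏ + δᵢᵏ ∂ⱼg + δⱼᵏ ∂ᵢg for a smooth function g (strong projective equivalence by ω = dg), then the symmetrized Ricci tensors satisfy ρ̃ₛ = ρₛ - (m-1)(H_∇ g - dg ⊗ dg), where (H_∇ g)ᵢⱼ = ∂ᵢ∂ⱼg - Γᵢⱼᵏ∂ₖg and ρₛ denotes the symmetric part of ρ. -/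
/-- Partial derivative in the `i`-th coordinate direction. -/
noncomputable def pd {n : ℕ} (i : Fin n) (f : (Fin n → ℝ) → ℝ) : (Fin n → ℝ) → ℝ :=
  fun x => fderiv ℝ f x (Pi.single i 1)

/-- Affine Hessian: `(H_∇ f)ᵢⱼ = ∂ᵢ∂ⱼ f - Γᵢⱼᵏ ∂ₖ f`. -/
noncomputable def affHess {n : ℕ} (Γ : Fin n → Fin n → Fin n → (Fin n → ℝ) → ℝ)
    (f : (Fin n → ℝ) → ℝ) (i j : Fin n) : (Fin n → ℝ) → ℝ :=
  fun x => pd i (pd j f) x - ∑ k, Γ i j k x * pd k f x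

/-- Coordinate Ricci tensor
`ρⱼₖ = ∂ᵢΓⱼₖⁱ - ∂ⱼΓᵢₖⁱ + ΓᵢₗⁱΓⱼₖˡ - ΓⱼₗⁱΓᵢₖˡ` (sums over `i`, `l`). -/
noncomputable def ricci {n : ℕ} (Γ : Fin n → Fin n → Fin n → (Fin n → ℝ) → ℝ)
    (j k : Fin n) : (Fin n → ℝ) → ℝ :=
  fun x => ∑ i, (pd i (Γ j k i) x - pd j (Γ i k i) x
    + ∑ l, (Γ i l i x * Γ j k l x - Γ j l i x * Γ i k l x))

/-- Symmetrized Ricci tensor. -/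
noncomputable def ricciS {n : ℕ} (Γ : Fin n → Fin n → Fin n → (Fin n → ℝ) → ℝ)
    (j k : Fin n) : (Fin n → ℝ) → ℝ :=
  fun x => (ricci Γ j k x + ricci Γ k j x) / 2

lemma pd_contDiff {n : ℕ} (i : Fin n) {g : (Fin n → ℝ) → ℝ} (hg : ContDiff ℝ (⊤ : ℕ∞) g) :
    ContDiff ℝ (⊤ : ℕ∞) (pd i g) := by
  have h1 : ContDiff ℝ (⊤ : ℕ∞) (fderiv ℝ g) := hg.fderiv_right (by simp)
  exact h1.clm_apply contDiff_const

lemma pd_comm {n : ℕ} {g : (Fin n → ℝ) → ℝ} (hg : ContDiff ℝ (⊤ : ℕ∞) g) (i j : Fin n)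
    (x : Fin n → ℝ) : pd i (pd j g) x = pd j (pd i g) x := by
  have hd : ∀ y, HasFDerivAt g (fderiv ℝ g y) y := fun y =>
    (hg.differentiable (by simp) y).hasFDerivAt
  have h1 : ContDiff ℝ (⊤ : ℕ∞) (fderiv ℝ g) := hg.fderiv_right (by simp)
  have hx : HasFDerivAt (fderiv ℝ g) (fderiv ℝ (fderiv ℝ g) x) x :=
    (h1.differentiable (by simp) x).hasFDerivAt
  have key : ∀ v w : Fin n → ℝ,
      fderiv ℝ (fun y => fderiv ℝ g y w) x v = fderiv ℝ (fderiv ℝ g) x v w := by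
    intro v w
    rw [(hx.clm_apply (hasFDerivAt_const w x)).fderiv]
    simp
  show fderiv ℝ (fun y => fderiv ℝ g y (Pi.single j 1)) x (Pi.single i 1)
      = fderiv ℝ (fun y => fderiv ℝ g y (Pi.single i 1)) x (Pi.single j 1)
  rw [key, key, second_derivative_symmetric hd hx]

lemma pd_add3 {n : ℕ} (i : Fin n) (f h1 h2 : (Fin n → ℝ) → ℝ) (c1 c2 : ℝ) (x : Fin n → ℝ)
    (hf : DifferentiableAt ℝ f x) (hh1 : DifferentiableAt ℝ h1 x)
    (hh2 : DifferentiableAt ℝ h2 x) :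
    pd i (fun y => f y + c1 * h1 y + c2 * h2 y) x
      = pd i f x + c1 * pd i h1 x + c2 * pd i h2 x := by
  unfold pd
  rw [fderiv_fun_add (f := fun y => f y + c1 * h1 y) (hf.add (hh1.const_mul c1)) (hh2.const_mul c2),
    fderiv_fun_add hf (hh1.const_mul c1), fderiv_const_mul hh1, fderiv_const_mul hh2]
  simp

lemma ricci_deform {m : ℕ} (Γ : Fin m → Fin m → Fin m → (Fin m → ℝ) → ℝ)
    (hΓ : ∀ i j k, ContDiff ℝ (⊤ : ℕ∞) (Γ i j k))
    (hsym : ∀ i j k, Γ i j k = Γ j i k)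
    (g : (Fin m → ℝ) → ℝ) (hg : ContDiff ℝ (⊤ : ℕ∞) g) (j k : Fin m) (x : Fin m → ℝ) :
    ricci (fun i j k x => Γ i j k x
        + (if i = k then 1 else 0) * pd j g x
        + (if j = k then 1 else 0) * pd i g x) j k x
      = ricci Γ j k x - ((m : ℝ) - 1) * (affHess Γ g j k x - pd j g x * pd k g x) := by
  have hpd : ∀ (p q r s : Fin m) (c1 c2 : ℝ) (u v : Fin m),
      pd s (fun y => Γ p q r y + c1 * pd u g y + c2 * pd v g y) x
        = pd s (Γ p q r) x + c1 * pd s (pd u g) x + c2 * pd s (pd v g) x :=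
    fun p q r s c1 c2 u v =>
      pd_add3 s _ _ _ c1 c2 x ((hΓ p q r).differentiable (by simp) x)
        ((pd_contDiff u hg).differentiable (by simp) x)
        ((pd_contDiff v hg).differentiable (by simp) x)
  simp only [ricci, affHess, hpd]
  simp only [mul_add, add_mul, mul_ite, ite_mul, mul_one, one_mul, mul_zero, zero_mul,
    eq_self_iff_true, if_true, Finset.sum_add_distrib, Finset.sum_sub_distrib,
    Finset.sum_ite_irrel, Finset.sum_ite_eq, Finset.sum_ite_eq', Finset.mem_univ,
    Finset.sum_const_zero, Finset.sum_const, Finset.card_univ, Fintype.card_fin,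
    nsmul_eq_mul]
  have hs : ∀ a b : Fin m, Γ j a b x = Γ a j b x := fun a b => congrFun (hsym j a b) x
  rw [pd_comm hg k j x]
  simp only [hs, ← Finset.sum_mul, ← Finset.mul_sum]
  ring_nf
  simp only [mul_comm]
  ring


lemma affHess_symm {m : ℕ} (Γ : Fin m → Fin m → Fin m → (Fin m → ℝ) → ℝ)
    (hsym : ∀ i j k, Γ i j k = Γ j i k)
    (g : (Fin m → ℝ) → ℝ) (hg : ContDiff ℝ (⊤ : ℕ∞) g) (j k : Fin m) (x : Fin m → ℝ) :
    affHess Γ g k j x = affHess Γ g j k x := by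
  unfold affHess
  rw [pd_comm hg k j x]
  congr 1
  exact Finset.sum_congr rfl fun l _ => by rw [hsym k j l]

/-- transformation law of the symmetrized Ricci tensor under the strong
projective deformation Γ̃ᵢⱼᵏ = Γᵢⱼᵏ + δᵢᵏ∂ⱼg + δⱼᵏ∂ᵢg:
ρ̃ₛ = ρₛ - (m-1)(H_∇ g - dg ⊗ dg). -/
theorem stmt2 (m : ℕ) (hm : 2 ≤ m) (U : Set (Fin m → ℝ)) (hU : IsOpen U)
    (Γ : Fin m → Fin m → Fin m → (Fin m → ℝ) → ℝ)
    (hΓ : ∀ i j k, ContDiff ℝ (⊤ : ℕ∞) (Γ i j k))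
    (hsym : ∀ i j k, Γ i j k = Γ j i k)
    (g : (Fin m → ℝ) → ℝ) (hg : ContDiff ℝ (⊤ : ℕ∞) g) :
    ∀ x ∈ U, ∀ j k : Fin m,
      ricciS (fun i j k x => Γ i j k x
        + (if i = k then 1 else 0) * pd j g x
        + (if j = k then 1 else 0) * pd i g x) j k x
      = ricciS Γ j k x - ((m : ℝ) - 1) * (affHess Γ g j k x - pd j g x * pd k g x) := by
  intro x _ j k
  unfold ricciS
  rw [ricci_deform Γ hΓ hsym g hg j k x, ricci_deform Γ hΓ hsym g hg k j x,
    affHess_symm Γ hsym g hg j k x, mul_comm (pd k g x) (pd j g x)]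
  ring
end

section
/- Let ∇ and ∇̃ be torsion-free connections on an open subset of ℝ^m related by Γ̃ᵢⱼᵏ = Γᵢⱼᵏ + δᵢᵏ∂ⱼg + δⱼᵏ∂ᵢg for a smooth function g, and let μ = -1/(m-1). Then for every smooth f, Q_{μ,∇} f = e^{-g} Q_{μ,∇̃}(e^g f), where Q_{μ,∇}f := H_∇ f - μ f ρ_{s,∇}. In particular f ↦ e^g f is a linear isomorphism from {f : H_∇ f = μ f ρ_{s,∇}} onto {h : H_∇̃ h = μ h ρ_{s,∇̃}}. -/
/-- Quasi-Einstein operator Q_{μ,∇} f = H_∇ f - μ f ρ_{s,∇}. -/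
noncomputable def qeOp {n : ℕ} (Γ : Fin n → Fin n → Fin n → (Fin n → ℝ) → ℝ) (μ : ℝ)
    (f : (Fin n → ℝ) → ℝ) (i j : Fin n) : (Fin n → ℝ) → ℝ :=
  fun x => affHess Γ f i j x - μ * f x * ricciS Γ i j x

namespace Stmt3Aux

variable {n : ℕ}

lemma pd_smooth {f : (Fin n → ℝ) → ℝ} (hf : ContDiff ℝ (⊤ : ℕ∞) f) (i : Fin n) :
    ContDiff ℝ (⊤ : ℕ∞) (pd i f) := by
  have h1 : ContDiff ℝ (⊤ : ℕ∞) (fderiv ℝ f) := hf.fderiv_right (by simp)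
  exact (ContinuousLinearMap.apply ℝ ℝ ((Pi.single i 1 : Fin n → ℝ))).contDiff.comp h1

lemma pd_add {f g : (Fin n → ℝ) → ℝ} {x : Fin n → ℝ} (hf : DifferentiableAt ℝ f x)
    (hg : DifferentiableAt ℝ g x) (i : Fin n) :
    pd i (fun y => f y + g y) x = pd i f x + pd i g x := by
  simp [pd, fderiv_fun_add hf hg]

lemma pd_mul {f g : (Fin n → ℝ) → ℝ} {x : Fin n → ℝ} (hf : DifferentiableAt ℝ f x)
    (hg : DifferentiableAt ℝ g x) (i : Fin n) :
    pd i (fun y => f y * g y) x = pd i f x * g x + f x * pd i g x := by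
  simp [pd, fderiv_fun_mul hf hg]; ring

lemma pd_const_mul {g : (Fin n → ℝ) → ℝ} {x : Fin n → ℝ} (c : ℝ)
    (hg : DifferentiableAt ℝ g x) (i : Fin n) :
    pd i (fun y => c * g y) x = c * pd i g x := by
  simp [pd, fderiv_const_mul hg]

lemma pd_exp {g : (Fin n → ℝ) → ℝ} {x : Fin n → ℝ} (hg : DifferentiableAt ℝ g x) (i : Fin n) :
    pd i (fun y => Real.exp (g y)) x = Real.exp (g x) * pd i g x := by
  simp [pd, fderiv_exp hg]

lemma pd_eq_snd {g : (Fin n → ℝ) → ℝ} (hg : ContDiff ℝ (⊤ : ℕ∞) g) (a b : Fin n) (x : Fin n → ℝ) :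
    pd a (pd b g) x = fderiv ℝ (fderiv ℝ g) x (Pi.single a 1) (Pi.single b 1) := by
  have hdf : DifferentiableAt ℝ (fderiv ℝ g) x :=
    ((hg.fderiv_right (m := 1) (by exact WithTop.coe_le_coe.mpr le_top)).differentiable one_ne_zero) x
  have h1 : pd b g = ⇑((ContinuousLinearMap.apply ℝ ℝ) (Pi.single b 1 : Fin n → ℝ))
      ∘ fderiv ℝ g := rfl
  rw [pd, h1]
  rw [fderiv_comp x ((ContinuousLinearMap.apply ℝ ℝ
    ((Pi.single b 1 : Fin n → ℝ))).differentiableAt) hdf]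
  simp [ContinuousLinearMap.fderiv]

lemma pd_clairaut {g : (Fin n → ℝ) → ℝ} (hg : ContDiff ℝ (⊤ : ℕ∞) g) (a b : Fin n) (x : Fin n → ℝ) :
    pd a (pd b g) x = pd b (pd a g) x := by
  rw [pd_eq_snd hg, pd_eq_snd hg]
  exact second_derivative_symmetric (f := g)
    (fun y => ((hg.differentiable (by simp)) y).hasFDerivAt)
    (((hg.fderiv_right (m := 1) (by exact WithTop.coe_le_coe.mpr le_top)).differentiable one_ne_zero x).hasFDerivAt) _ _

end Stmt3Aux

open Stmt3Aux in
/-- for μ = -1/(m-1), Q_{μ,∇} f = e^{-g} Q_{μ,∇̃}(e^g f); in particular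
f ↦ e^g f is a bijection between the solution spaces of the affine quasi-Einstein
equation for ∇ and ∇̃. -/
theorem stmt3 (m : ℕ) (hm : 2 ≤ m) (U : Set (Fin m → ℝ)) (hU : IsOpen U)
    (Γ : Fin m → Fin m → Fin m → (Fin m → ℝ) → ℝ)
    (hΓ : ∀ i j k, ContDiff ℝ (⊤ : ℕ∞) (Γ i j k))
    (hsym : ∀ i j k, Γ i j k = Γ j i k)
    (g : (Fin m → ℝ) → ℝ) (hg : ContDiff ℝ (⊤ : ℕ∞) g)
    (Γt : Fin m → Fin m → Fin m → (Fin m → ℝ) → ℝ)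
    (hΓt : Γt = fun i j k x => Γ i j k x
        + (if i = k then 1 else 0) * pd j g x
        + (if j = k then 1 else 0) * pd i g x)
    (μ : ℝ) (hμ : μ = -1 / ((m : ℝ) - 1)) :
    (∀ f : (Fin m → ℝ) → ℝ, ContDiff ℝ (⊤ : ℕ∞) f → ∀ x ∈ U, ∀ i j : Fin m,
        qeOp Γ μ f i j x
          = Real.exp (-(g x)) * qeOp Γt μ (fun y => Real.exp (g y) * f y) i j x)
    ∧ (∀ f : (Fin m → ℝ) → ℝ, ContDiff ℝ (⊤ : ℕ∞) f →
        ((∀ x ∈ U, ∀ i j : Fin m, qeOp Γ μ f i j x = 0)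
          ↔ (∀ x ∈ U, ∀ i j : Fin m, qeOp Γt μ (fun y => Real.exp (g y) * f y) i j x = 0))) := by
  -- basic facts
  have hm1 : ((m : ℝ) - 1) ≠ 0 := by
    have h2 : (2 : ℝ) ≤ (m : ℝ) := by exact_mod_cast hm
    intro h; linarith
  have hμc : μ * ((m : ℝ) - 1) = -1 := by
    rw [hμ]; field_simp
  have hv : ∀ a b c (x : Fin m → ℝ), Γt a b c x = Γ a b c x
      + (if a = c then (1:ℝ) else 0) * pd b g x
      + (if b = c then (1:ℝ) else 0) * pd a g x := fun a b c x => by rw [hΓt]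
  have hΓtf : ∀ a b c, Γt a b c = fun x => Γ a b c x
      + (if a = c then (1:ℝ) else 0) * pd b g x
      + (if b = c then (1:ℝ) else 0) * pd a g x := fun a b c => funext fun x => hv a b c x
  have hcl : ∀ a b (x : Fin m → ℝ), pd a (pd b g) x = pd b (pd a g) x :=
    fun a b x => pd_clairaut hg a b x
  have hs : ∀ a b c (x : Fin m → ℝ), Γ a b c x = Γ b a c x := fun a b c x => by
    rw [hsym]
  -- derivative of the transformed Christoffel symbols
  have hpdΓt : ∀ (p a b c : Fin m) (x : Fin m → ℝ), pd p (Γt a b c) x = pd p (Γ a b c) x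
      + (if a = c then (1:ℝ) else 0) * pd p (pd b g) x
      + (if b = c then (1:ℝ) else 0) * pd p (pd a g) x := by
    intro p a b c x
    have D1 : DifferentiableAt ℝ (fun x => Γ a b c x
        + (if a = c then (1:ℝ) else 0) * pd b g x) x :=
      ((hΓ a b c).differentiable (by simp) x).add
        (((contDiff_const.mul (pd_smooth hg b)).differentiable (by simp)) x)
    have D2 : DifferentiableAt ℝ
        (fun x => (if b = c then (1:ℝ) else 0) * pd a g x) x :=
      ((contDiff_const.mul (pd_smooth hg a)).differentiable (by simp)) x
    rw [hΓtf a b c]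
    rw [pd_add D1 D2 p,
      pd_add ((hΓ a b c).differentiable (by simp) x)
        (((contDiff_const.mul (pd_smooth hg b)).differentiable (by simp)) x) p,
      pd_const_mul _ ((pd_smooth hg b).differentiable (by simp) x) p,
      pd_const_mul _ ((pd_smooth hg a).differentiable (by simp) x) p]
  -- Ricci transformation
  have hricci : ∀ (j k : Fin m) (x : Fin m → ℝ), ricci Γt j k x = ricci Γ j k x
      - ((m:ℝ) - 1) * (pd j (pd k g) x - (∑ l, Γ j k l x * pd l g x)
          - pd j g x * pd k g x) := by
    intro j k x
    simp only [ricci, hv, hpdΓt]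
    simp only [if_pos rfl, mul_add, add_mul, ite_mul, mul_ite, mul_one, one_mul, mul_zero,
      zero_mul, Finset.sum_add_distrib, Finset.sum_sub_distrib, Finset.sum_ite_eq,
      Finset.sum_ite_eq', Finset.mem_univ, if_true, Finset.sum_const, Finset.card_univ,
      Fintype.card_fin, nsmul_eq_mul, Finset.sum_ite_irrel, Finset.sum_const_zero]
    rw [hcl k j]
    have A1 : ∑ l, pd l g x * Γ j k l x = ∑ l, Γ j k l x * pd l g x :=
      Finset.sum_congr rfl fun l _ => mul_comm _ _
    have A2 : ∑ i, Γ j i i x * pd k g x = ∑ i, Γ i j i x * pd k g x :=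
      Finset.sum_congr rfl fun i _ => by rw [hs j i i]
    have A3 : ∑ i, pd j g x * Γ i k i x = ∑ i, Γ i k i x * pd j g x :=
      Finset.sum_congr rfl fun i _ => mul_comm _ _
    simp only [A1, A2, A3]
    ring
  -- symmetrized Ricci transformation
  have hrS : ∀ (i j : Fin m) (x : Fin m → ℝ), ricciS Γt i j x = ricciS Γ i j x
      - ((m:ℝ) - 1) * (affHess Γ g i j x - pd i g x * pd j g x) := by
    intro i j x
    simp only [ricciS, hricci i j x, hricci j i x, affHess]
    rw [hcl j i]
    have A4 : ∑ l, Γ j i l x * pd l g x = ∑ l, Γ i j l x * pd l g x :=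
      Finset.sum_congr rfl fun l _ => by rw [hs j i l]
    rw [A4]
    ring
  -- the key pointwise identity
  have key : ∀ f : (Fin m → ℝ) → ℝ, ContDiff ℝ (⊤ : ℕ∞) f → ∀ (x : Fin m → ℝ) (i j : Fin m),
      qeOp Γ μ f i j x
        = Real.exp (-(g x)) * qeOp Γt μ (fun y => Real.exp (g y) * f y) i j x := by
    intro f hf x i j
    have hpdh : ∀ (p : Fin m) (x : Fin m → ℝ), pd p (fun y => Real.exp (g y) * f y) x
        = Real.exp (g x) * (pd p g x * f x + pd p f x) := by
      intro p x
      rw [pd_mul (hg.exp.differentiable (by simp) x) (hf.differentiable (by simp) x) p,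
        pd_exp (hg.differentiable (by simp) x) p]
      ring
    have hpdhf : ∀ p : Fin m, pd p (fun y => Real.exp (g y) * f y)
        = fun x => Real.exp (g x) * (pd p g x * f x + pd p f x) :=
      fun p => funext fun x => hpdh p x
    -- second derivative of h
    have e1 : pd i (pd j (fun y => Real.exp (g y) * f y)) x
        = Real.exp (g x) * (pd i g x * (pd j g x * f x + pd j f x)
          + (pd i (pd j g) x * f x + pd j g x * pd i f x + pd i (pd j f) x)) := by
      rw [hpdhf j]
      rw [pd_mul (hg.exp.differentiable (by simp) x)
        ((((pd_smooth hg j).mul hf).add (pd_smooth hf j)).differentiable (by simp) x) i]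
      rw [pd_exp (hg.differentiable (by simp) x) i]
      rw [pd_add (((pd_smooth hg j).mul hf).differentiable (by simp) x)
        ((pd_smooth hf j).differentiable (by simp) x) i]
      rw [pd_mul ((pd_smooth hg j).differentiable (by simp) x)
        (hf.differentiable (by simp) x) i]
      ring
    -- the Christoffel contraction
    have e2 : ∑ k, Γt i j k x * pd k (fun y => Real.exp (g y) * f y) x
        = Real.exp (g x) * ((∑ k, Γ i j k x * (pd k g x * f x + pd k f x))
          + pd j g x * (pd i g x * f x + pd i f x)
          + pd i g x * (pd j g x * f x + pd j f x)) := by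
      have step : ∀ k : Fin m, Γt i j k x * pd k (fun y => Real.exp (g y) * f y) x
          = Real.exp (g x) * (Γ i j k x * (pd k g x * f x + pd k f x))
            + (if i = k then Real.exp (g x) * (pd j g x * (pd k g x * f x + pd k f x)) else 0)
            + (if j = k then Real.exp (g x) * (pd i g x * (pd k g x * f x + pd k f x)) else 0) := by
        intro k
        rw [hv, hpdh]
        split_ifs <;> ring
      rw [Finset.sum_congr rfl fun k _ => step k, Finset.sum_add_distrib,
        Finset.sum_add_distrib, Finset.sum_ite_eq, Finset.sum_ite_eq]
      simp only [Finset.mem_univ, if_true]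
      rw [← Finset.mul_sum]
      ring
    have e3 : ∑ k, Γ i j k x * (pd k g x * f x + pd k f x)
        = (∑ k, Γ i j k x * pd k g x) * f x + ∑ k, Γ i j k x * pd k f x := by
      rw [Finset.sum_mul, ← Finset.sum_add_distrib]
      exact Finset.sum_congr rfl fun k _ => by ring
    have ehess : affHess Γt (fun y => Real.exp (g y) * f y) i j x
        = Real.exp (g x) * (affHess Γ f i j x
          + f x * (affHess Γ g i j x - pd i g x * pd j g x)) := by
      simp only [affHess]
      rw [e1, e2, e3]
      ring
    have key2 : qeOp Γt μ (fun y => Real.exp (g y) * f y) i j x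
        = Real.exp (g x) * qeOp Γ μ f i j x := by
      simp only [qeOp]
      rw [ehess, hrS]
      linear_combination
        (Real.exp (g x) * f x * (affHess Γ g i j x - pd i g x * pd j g x)) * hμc
    rw [key2, ← mul_assoc, ← Real.exp_add, neg_add_cancel, Real.exp_zero, one_mul]
  refine ⟨fun f hf x _ i j => key f hf x i j, fun f hf => ⟨?_, ?_⟩⟩
  · intro H x hx i j
    have h0 := key f hf x i j
    rw [H x hx i j] at h0
    exact ((mul_eq_zero.mp h0.symm).resolve_left (Real.exp_ne_zero _))
  · intro H x hx i j
    rw [key f hf x i j, H x hx i j, mul_zero]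
end

section
/- Let ∇ and ∇̃ be torsion-free connections on an open subset of ℝ^m (m ≥ 2) related by Γ̃ᵢⱼᵏ = Γᵢⱼᵏ + δᵢᵏ∂ⱼg + δⱼᵏ∂ᵢg for a smooth function g. Then the following are equivalent: (a) ρ_{s,∇̃} = ρ_{s,∇}; (b) H_∇ g - dg ⊗ dg = 0; (c) H_∇(e^{-g}) = 0. -/
lemma contDiff_pd {n : ℕ} {f : (Fin n → ℝ) → ℝ} (hf : ContDiff ℝ (⊤ : ℕ∞) f) (i : Fin n) :
    ContDiff ℝ (⊤ : ℕ∞) (pd i f) := by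
  have h1 : ContDiff ℝ (⊤ : ℕ∞) (fderiv ℝ f) := hf.fderiv_right (by simp)
  exact h1.clm_apply contDiff_const

lemma pd_add {n : ℕ} {f h : (Fin n → ℝ) → ℝ} {x : Fin n → ℝ}
    (hf : DifferentiableAt ℝ f x) (hh : DifferentiableAt ℝ h x) (i : Fin n) :
    pd i (fun y => f y + h y) x = pd i f x + pd i h x := by
  simp [pd, fderiv_fun_add hf hh]

lemma pd_const_mul {n : ℕ} {f : (Fin n → ℝ) → ℝ} {x : Fin n → ℝ}
    (hf : DifferentiableAt ℝ f x) (c : ℝ) (i : Fin n) :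
    pd i (fun y => c * f y) x = c * pd i f x := by
  simp [pd, fderiv_const_mul hf c]

lemma pd_mul {n : ℕ} {f h : (Fin n → ℝ) → ℝ} {x : Fin n → ℝ}
    (hf : DifferentiableAt ℝ f x) (hh : DifferentiableAt ℝ h x) (i : Fin n) :
    pd i (fun y => f y * h y) x = pd i f x * h x + f x * pd i h x := by
  simp [pd, fderiv_fun_mul hf hh]; ring

lemma pd_neg {n : ℕ} {f : (Fin n → ℝ) → ℝ} {x : Fin n → ℝ} (i : Fin n) :
    pd i (fun y => -(f y)) x = -(pd i f x) := by
  simp [pd, fderiv_neg]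

lemma pd_exp_neg {n : ℕ} {g : (Fin n → ℝ) → ℝ} {x : Fin n → ℝ}
    (hg : DifferentiableAt ℝ g x) (i : Fin n) :
    pd i (fun y => Real.exp (-(g y))) x = -(Real.exp (-(g x)) * pd i g x) := by
  have hd : HasFDerivAt (fun y => Real.exp (-(g y))) (Real.exp (-(g x)) • -(fderiv ℝ g x)) x :=
    hg.hasFDerivAt.neg.exp
  simp [pd, hd.fderiv]

lemma pd_pd_symm {n : ℕ} {f : (Fin n → ℝ) → ℝ} (hf : ContDiff ℝ (⊤ : ℕ∞) f) (i j : Fin n)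
    (x : Fin n → ℝ) : pd i (pd j f) x = pd j (pd i f) x := by
  have hd : ContDiff ℝ (⊤ : ℕ∞) (fderiv ℝ f) := hf.fderiv_right (by simp)
  have key : ∀ a b : Fin n, pd a (pd b f) x
      = fderiv ℝ (fderiv ℝ f) x (Pi.single a 1) (Pi.single b 1) := by
    intro a b
    have : pd b f = fun y => (fderiv ℝ f y) (Pi.single b 1) := rfl
    rw [pd, this, fderiv_clm_apply (hd.differentiable (by simp) x) (differentiableAt_const _)]
    simp
  rw [key, key]
  exact (hf.contDiffAt.isSymmSndFDerivAt (by rw [minSmoothness_of_isRCLikeNormedField]; exact WithTop.coe_le_coe.2 (le_top : (2:ℕ∞) ≤ ⊤))) _ _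

lemma quad_sum (m : ℕ) (j k : Fin m) (A : Fin m → Fin m → Fin m → ℝ)
    (hT : ∀ a, ∑ i, A a i i = ∑ i, A i a i) (P : Fin m → ℝ) :
    ∑ i, ∑ l, ((A i l i + (if i = i then (1:ℝ) else 0) * P l + (if l = i then 1 else 0) * P i)
        * (A j k l + (if j = l then 1 else 0) * P k + (if k = l then 1 else 0) * P j)
      - (A j l i + (if j = i then 1 else 0) * P l + (if l = i then 1 else 0) * P j)
        * (A i k l + (if i = l then 1 else 0) * P k + (if k = l then 1 else 0) * P i))
    = (∑ i, ∑ l, (A i l i * A j k l - A j l i * A i k l))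
      + ((m : ℝ) - 1) * ((∑ l, A j k l * P l) + P j * P k) := by
  have hite : (∑ x : Fin m, ∑ x1 : Fin m, if j = x then P x1 * A x k x1 else 0)
      = ∑ x1 : Fin m, A j k x1 * P x1 := by
    calc (∑ x : Fin m, ∑ x1 : Fin m, if j = x then P x1 * A x k x1 else 0)
        = ∑ x : Fin m, (if j = x then ∑ x1 : Fin m, P x1 * A x k x1 else 0) := by
          refine Finset.sum_congr rfl fun x _ => ?_; split <;> simp
      _ = ∑ x1 : Fin m, P x1 * A j k x1 := by simp
      _ = _ := Finset.sum_congr rfl fun x _ => mul_comm _ _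
  have h1 : ∑ x : Fin m, A x j x * P k = ∑ x : Fin m, A j x x * P k := by
    rw [← Finset.sum_mul, ← Finset.sum_mul, ← hT j]
  have h3 : ∑ x : Fin m, A x k x * P j = ∑ x : Fin m, P j * A x k x :=
    Finset.sum_congr rfl fun x _ => mul_comm _ _
  have h4 : ∑ x : Fin m, P x * A j k x = ∑ x : Fin m, A j k x * P x :=
    Finset.sum_congr rfl fun x _ => mul_comm _ _
  simp only [if_pos rfl, one_mul, mul_add, add_mul, ite_mul, mul_ite, zero_mul, mul_zero,
    one_mul, mul_one, Finset.sum_add_distrib, Finset.sum_sub_distrib, Finset.sum_ite_eq,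
    Finset.sum_ite_eq', Finset.mem_univ, if_true, Finset.sum_const, Finset.card_univ,
    Fintype.card_fin, nsmul_eq_mul]
  linear_combination h1 + ((m:ℝ)+1) * h4 + h3 - hite

/-- equivalence of (a) ρ_{s,∇̃} = ρ_{s,∇}, (b) H_∇ g - dg⊗dg = 0, and
(c) H_∇(e^{-g}) = 0, for the strong projective deformation by dg. -/
theorem stmt4 (m : ℕ) (hm : 2 ≤ m) (U : Set (Fin m → ℝ)) (hU : IsOpen U)
    (Γ : Fin m → Fin m → Fin m → (Fin m → ℝ) → ℝ)
    (hΓ : ∀ i j k, ContDiff ℝ (⊤ : ℕ∞) (Γ i j k))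
    (hsym : ∀ i j k, Γ i j k = Γ j i k)
    (g : (Fin m → ℝ) → ℝ) (hg : ContDiff ℝ (⊤ : ℕ∞) g)
    (Γt : Fin m → Fin m → Fin m → (Fin m → ℝ) → ℝ)
    (hΓt : Γt = fun i j k x => Γ i j k x
        + (if i = k then 1 else 0) * pd j g x
        + (if j = k then 1 else 0) * pd i g x) :
    ((∀ x ∈ U, ∀ j k : Fin m, ricciS Γt j k x = ricciS Γ j k x)
      ↔ (∀ x ∈ U, ∀ j k : Fin m, affHess Γ g j k x - pd j g x * pd k g x = 0))
    ∧ ((∀ x ∈ U, ∀ j k : Fin m, affHess Γ g j k x - pd j g x * pd k g x = 0)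
      ↔ (∀ x ∈ U, ∀ j k : Fin m, affHess Γ (fun y => Real.exp (-(g y))) j k x = 0)) := by
  subst hΓt
  have hgd : Differentiable ℝ g := hg.differentiable (by simp)
  have hpdg : ∀ a : Fin m, ContDiff ℝ (⊤ : ℕ∞) (pd a g) := fun a => contDiff_pd hg a
  have hΓd : ∀ a b c : Fin m, Differentiable ℝ (Γ a b c) :=
    fun a b c => (hΓ a b c).differentiable (by simp)
  have hmR : ((m:ℝ) - 1) ≠ 0 := by
    have : (2:ℝ) ≤ (m:ℝ) := by exact_mod_cast hm
    nlinarith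
  -- value of deformed connection
  set Γt : Fin m → Fin m → Fin m → (Fin m → ℝ) → ℝ := fun i j k x => Γ i j k x
        + (if i = k then 1 else 0) * pd j g x
        + (if j = k then 1 else 0) * pd i g x with hΓt
  -- derivatives of deformed connection
  have hpdΓt : ∀ (a b c d : Fin m) (x : Fin m → ℝ), pd a (Γt b c d) x
      = pd a (Γ b c d) x + (if b = d then 1 else 0) * pd a (pd c g) x
        + (if c = d then 1 else 0) * pd a (pd b g) x := by
    intro a b c d x
    have e1 : Γt b c d = fun y =>
        (fun y => Γ b c d y + (if b = d then 1 else 0) * pd c g y) y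
        + (if c = d then 1 else 0) * pd b g y := rfl
    rw [e1, pd_add (f := fun y => Γ b c d y + (if b = d then 1 else 0) * pd c g y) (((hΓd b c d) x).add ((((hpdg c).differentiable (by simp)) x).const_mul _))
      ((((hpdg b).differentiable (by simp)) x).const_mul _),
      pd_add ((hΓd b c d) x) ((((hpdg c).differentiable (by simp)) x).const_mul _),
      pd_const_mul (((hpdg c).differentiable (by simp)) x),
      pd_const_mul (((hpdg b).differentiable (by simp)) x)]
  -- the key Ricci difference identity
  have key : ∀ (j k : Fin m) (x : Fin m → ℝ),
      ricci Γt j k x = ricci Γ j k x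
        - ((m:ℝ) - 1) * (pd j (pd k g) x - (∑ l, Γ j k l x * pd l g x)
          - pd j g x * pd k g x) := by
    intro j k x
    have hT : ∀ a, ∑ i, Γ a i i x = ∑ i, Γ i a i x :=
      fun a => Finset.sum_congr rfl fun i _ => by rw [hsym]
    have hquad := quad_sum m j k (fun a b c => Γ a b c x) hT (fun a => pd a g x)
    have hA : (∑ i, pd i (Γt j k i) x)
        = (∑ i, pd i (Γ j k i) x) + pd j (pd k g) x + pd k (pd j g) x := by
      rw [Finset.sum_congr rfl fun i _ => hpdΓt i j k i x]
      simp [Finset.sum_add_distrib, ite_mul, Finset.sum_ite_eq]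
    have hB : (∑ i, pd j (Γt i k i) x)
        = (∑ i, pd j (Γ i k i) x) + (m:ℝ) * pd j (pd k g) x + pd j (pd k g) x := by
      rw [Finset.sum_congr rfl fun i _ => hpdΓt j i k i x]
      simp [Finset.sum_add_distrib, ite_mul, Finset.sum_ite_eq, Finset.sum_const,
        Finset.card_univ, mul_comm]
    have hQ : (∑ i, ∑ l, (Γt i l i x * Γt j k l x - Γt j l i x * Γt i k l x))
        = (∑ i, ∑ l, (Γ i l i x * Γ j k l x - Γ j l i x * Γ i k l x))
          + ((m:ℝ) - 1) * ((∑ l, Γ j k l x * pd l g x) + pd j g x * pd k g x) := by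
      rw [← hquad]
    have hsymD : pd k (pd j g) x = pd j (pd k g) x := pd_pd_symm hg k j x
    have expand : ∀ (G : Fin m → Fin m → Fin m → (Fin m → ℝ) → ℝ),
        ricci G j k x = (∑ i, pd i (G j k i) x) - (∑ i, pd j (G i k i) x)
          + ∑ i, ∑ l, (G i l i x * G j k l x - G j l i x * G i k l x) := by
      intro G
      simp only [ricci, Finset.sum_add_distrib, Finset.sum_sub_distrib]
    rw [expand Γt, expand Γ]
    linear_combination hA - hB + hQ + hsymD
  -- symmetry of the Hessian-type expression
  have hE : ∀ (j k : Fin m) (x : Fin m → ℝ),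
      pd j (pd k g) x - (∑ l, Γ j k l x * pd l g x) - pd j g x * pd k g x
      = pd k (pd j g) x - (∑ l, Γ k j l x * pd l g x) - pd k g x * pd j g x := by
    intro j k x
    rw [pd_pd_symm hg j k x, Finset.sum_congr rfl fun l _ => by rw [hsym], mul_comm]
  -- identity for the Hessian of exp(-g)
  have hexp : ∀ (j k : Fin m) (x : Fin m → ℝ),
      affHess Γ (fun y => Real.exp (-(g y))) j k x
      = -(Real.exp (-(g x)) * (affHess Γ g j k x - pd j g x * pd k g x)) := by
    intro j k x
    have h1 : pd k (fun y => Real.exp (-(g y))) = fun y => -(Real.exp (-(g y)) * pd k g y) :=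
      funext fun y => pd_exp_neg (hgd y) k
    have h2 : pd j (pd k (fun y => Real.exp (-(g y)))) x
        = -(pd j (fun y => Real.exp (-(g y)) * pd k g y) x) := by
      rw [h1]; exact pd_neg j
    have h3 : pd j (fun y => Real.exp (-(g y)) * pd k g y) x
        = pd j (fun y => Real.exp (-(g y))) x * pd k g x
          + Real.exp (-(g x)) * pd j (pd k g) x := by
      exact pd_mul (((Real.contDiff_exp.comp hg.neg).differentiable (by simp)) x)
        (((hpdg k).differentiable (by simp)) x) j
    have hsum : (∑ l, Γ j k l x * pd l (fun y => Real.exp (-(g y))) x)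
        = ∑ l, Γ j k l x * (-(Real.exp (-(g x)) * pd l g x)) :=
      Finset.sum_congr rfl fun l _ => by rw [pd_exp_neg (hgd x) l]
    have hsum2 : (∑ l, Γ j k l x * (-(Real.exp (-(g x)) * pd l g x)))
        = -(Real.exp (-(g x)) * ∑ l, Γ j k l x * pd l g x) := by
      rw [Finset.mul_sum, ← Finset.sum_neg_distrib]
      exact Finset.sum_congr rfl fun l _ => by ring
    simp only [affHess]
    rw [h2, h3, hsum, hsum2, pd_exp_neg (hgd x) j]
    ring
  constructor
  · constructor
    · intro h x hx j k
      have h1 := h x hx j k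
      have h2 := h x hx k j
      simp only [ricciS, key] at h1
      have hEjk := hE j k x
      have : ((m:ℝ) - 1) * (pd j (pd k g) x - (∑ l, Γ j k l x * pd l g x)
          - pd j g x * pd k g x) = 0 := by
        rw [div_eq_iff (by norm_num : (2:ℝ) ≠ 0)] at h1
        linear_combination (-(1:ℝ)/2) * h1 + (((m:ℝ)-1)/2) * hEjk
      have hz := (mul_eq_zero.1 this).resolve_left hmR
      simpa [affHess] using hz
    · intro h x hx j k
      have hjk := h x hx j k
      have hkj := h x hx k j
      simp only [affHess] at hjk hkj
      simp only [ricciS, key]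
      rw [show (pd j (pd k g) x - (∑ l, Γ j k l x * pd l g x) - pd j g x * pd k g x) = 0 by
          linear_combination hjk,
        show (pd k (pd j g) x - (∑ l, Γ k j l x * pd l g x) - pd k g x * pd j g x) = 0 by
          linear_combination hkj]
      ring
  · constructor
    · intro h x hx j k
      rw [hexp j k x, h x hx j k]
      ring
    · intro h x hx j k
      have h1 := h x hx j k
      rw [hexp j k x, neg_eq_zero, mul_eq_zero] at h1
      exact h1.resolve_left (Real.exp_ne_zero _)
end

section
/- On ℝ², let ∇ be the standard flat connection and let ∇̃ be defined by Γ̃ᵢⱼᵏ = δᵢᵏ ωⱼ + δⱼᵏ ωᵢ with ω = x² dx¹ (i.e. ω₁ = x², ω₂ = 0). Then the space of germs at any point of solutions of H_∇̃ f = -f ρ_{s,∇̃} is zero, whereas for the flat connection ∇ the solution space of H_∇ f = -f ρ_{s,∇} = 0 is 3-dimensional (spanned by 1, x¹, x²). Hence projective equivalence by a non-closed 1-form need not preserve dim E(·, -1, ∇). -/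
/-!
For `∇̃` the components `(1,1)` and `(0,1)` of the equation read `∂₁∂₁f = 0` and
`∂₀∂₁f - x² ∂₁f = f / 2` (index `0` is `x¹`, index `1` is `x²`). On a convex neighbourhood the
first makes `∂₁f`, and therefore also `∂₀∂₁f`, constant along vertical segments; the second then
says that along each vertical line `f` is affine with slope `-2 ∂₁f`. Since that slope is also
`∂₁f`, we get `∂₁f = 0` and then `f = 0`. For the flat connection the equation says that all
second partial derivatives vanish, which characterises the affine functions.
-/

open Function Filter Topology

section Partials

variable {n : ℕ}

lemma differentiable_pd {f : (Fin n → ℝ) → ℝ} (hf : ContDiff ℝ 2 f) (j : Fin n) :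
    Differentiable ℝ (pd j f) :=
  ((hf.fderiv_right (m := 1) (by norm_num)).clm_apply contDiff_const).differentiable one_ne_zero

lemma hasDerivAt_pd_update {g : (Fin n → ℝ) → ℝ} {z : Fin n → ℝ} {i : Fin n} {t : ℝ}
    (hg : DifferentiableAt ℝ g (update z i t)) :
    HasDerivAt (fun s => g (update z i s)) (pd i g (update z i t)) t :=
  hg.hasFDerivAt.comp_hasDerivAt t (hasDerivAt_update z i t)

lemma hasDerivAt_pd {g : (Fin n → ℝ) → ℝ} {z : Fin n → ℝ} {i : Fin n}
    (hg : DifferentiableAt ℝ g z) :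
    HasDerivAt (fun s => g (update z i s)) (pd i g z) (z i) := by
  have h := hasDerivAt_pd_update (i := i) (t := z i) (by rwa [update_eq_self])
  rwa [update_eq_self] at h

lemma eventually_update_mem {U : Set (Fin n → ℝ)} (hU : IsOpen U) {z : Fin n → ℝ} (hz : z ∈ U)
    (i : Fin n) : ∀ᶠ s in 𝓝 (z i), update z i s ∈ U :=
  (hasDerivAt_update z i (z i)).continuousAt.preimage_mem_nhds
    (by rw [update_eq_self]; exact hU.mem_nhds hz)

lemma convex_setOf_update_mem {U : Set (Fin n → ℝ)} (hU : Convex ℝ U) (z : Fin n → ℝ)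
    (i : Fin n) : Convex ℝ {s : ℝ | update z i s ∈ U} := by
  intro a ha b hb μ ν hμ hν hμν
  show update z i (μ • a + ν • b) ∈ U
  convert hU ha hb hμ hν hμν using 1
  ext k
  by_cases hk : k = i
  · subst hk; simp
  · simp [update_of_ne hk, ← add_mul, hμν]

variable {U : Set (Fin n → ℝ)} {g : (Fin n → ℝ) → ℝ} {i : Fin n}

lemma apply_update_eq_of_pd_eq_zero (hUo : IsOpen U) (hU : Convex ℝ U)
    (hg : Differentiable ℝ g) (hgi : ∀ z ∈ U, pd i g z = 0) {z : Fin n → ℝ} (hz : z ∈ U)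
    {t : ℝ} (ht : update z i t ∈ U) : g (update z i t) = g z := by
  have hS : IsOpen {s : ℝ | update z i s ∈ U} :=
    hUo.preimage (continuous_const.update i continuous_id)
  have := hS.is_const_of_deriv_eq_zero (convex_setOf_update_mem hU z i).isPreconnected
    (fun s _ => (hasDerivAt_pd_update (hg _)).differentiableAt.differentiableWithinAt)
    (fun s hs => (hasDerivAt_pd_update (hg _)).deriv.trans (hgi _ hs))
    ht (show update z i (z i) ∈ U by rwa [update_eq_self])
  simpa using this

lemma pd_apply_update_eq_of_pd_eq_zero (hUo : IsOpen U) (hU : Convex ℝ U)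
    (hg : Differentiable ℝ g) (hgi : ∀ z ∈ U, pd i g z = 0) {j : Fin n} (hji : j ≠ i)
    {z : Fin n → ℝ} (hz : z ∈ U) {t : ℝ} (ht : update z i t ∈ U) :
    pd j g (update z i t) = pd j g z := by
  have hj : update z i t j = z j := update_of_ne hji t z
  have hline : (fun s => g (update (update z i t) j s)) =ᶠ[𝓝 (z j)]
      fun s => g (update z j s) := by
    have hmem := eventually_update_mem hUo ht j
    rw [hj] at hmem
    filter_upwards [hmem, eventually_update_mem hUo hz j] with s hs hs'
    rw [← update_comm hji] at hs ⊢
    exact apply_update_eq_of_pd_eq_zero hUo hU hg hgi hs' hs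
  have h := hasDerivAt_pd (i := j) (hg (update z i t))
  rw [hj] at h
  exact h.unique ((hasDerivAt_pd (hg z)).congr_of_eventuallyEq hline)

end Partials

lemma eq_zero_of_pd_system {U : Set (Fin 2 → ℝ)} (hUo : IsOpen U) (hU : Convex ℝ U)
    {f : (Fin 2 → ℝ) → ℝ} (hf : ContDiff ℝ 2 f)
    (h11 : ∀ z ∈ U, pd 1 (pd 1 f) z = 0)
    (h01 : ∀ z ∈ U, pd 0 (pd 1 f) z - z 1 * pd 1 f z = f z / 2) :
    ∀ z ∈ U, f z = 0 := by
  have hfd : Differentiable ℝ f := hf.differentiable two_ne_zero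
  have hgd : Differentiable ℝ (pd 1 f) := differentiable_pd hf 1
  have hW : ∀ z ∈ U, pd 1 f z = 0 := by
    intro z hz
    set W := pd 1 f z
    set G := pd 0 (pd 1 f) z
    have hline : (fun t => f (update z 1 t)) =ᶠ[𝓝 (z 1)] fun t => 2 * (G - t * W) := by
      filter_upwards [eventually_update_mem hUo hz 1] with t ht
      have h := h01 _ ht
      rw [apply_update_eq_of_pd_eq_zero hUo hU hgd h11 hz ht,
        pd_apply_update_eq_of_pd_eq_zero hUo hU hgd h11 zero_ne_one hz ht, update_self] at h
      linarith
    have hslope : HasDerivAt (fun t => 2 * (G - t * W)) (2 * -(1 * W)) (z 1) :=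
      (((hasDerivAt_id' _).mul_const W).const_sub G).const_mul 2
    have hW2 := (hasDerivAt_pd (i := 1) (hfd z)).unique (hslope.congr_of_eventuallyEq hline)
    linarith
  intro z hz
  have hG : pd 0 (pd 1 f) z = 0 := by
    have hev : pd 1 f =ᶠ[𝓝 z] fun _ => 0 := eventually_of_mem (hUo.mem_nhds hz) hW
    simp [pd, hev.fderiv_eq]
  have h := h01 z hz
  rw [hG, hW z hz] at h
  linarith

section Flat

variable {n : ℕ}

lemma continuousLinearMap_ext_single {L M : (Fin n → ℝ) →L[ℝ] ℝ}
    (h : ∀ i, L (Pi.single i 1) = M (Pi.single i 1)) : L = M := by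
  refine ContinuousLinearMap.coe_injective (LinearMap.pi_ext fun i x => ?_)
  rw [← mul_one x, ← smul_eq_mul, Pi.single_smul', map_smul, map_smul,
    ContinuousLinearMap.coe_coe, ContinuousLinearMap.coe_coe, h i]

lemma pd_pd_eq_zero_of_hasFDerivAt {f : (Fin n → ℝ) → ℝ} {L : (Fin n → ℝ) →L[ℝ] ℝ}
    (hf : ∀ x, HasFDerivAt f L x) (x : Fin n → ℝ) (i j : Fin n) : pd i (pd j f) x = 0 := by
  have hconst : pd j f = fun _ => L (Pi.single j 1) := funext fun y => by rw [pd, (hf y).fderiv]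
  simp [pd, hconst]

lemma eq_add_fderiv_of_pd_pd_eq_zero {f : (Fin n → ℝ) → ℝ} (hf : ContDiff ℝ 2 f)
    (h : ∀ x i j, pd i (pd j f) x = 0) : f = fun x => f 0 + fderiv ℝ f 0 x := by
  have hpd : ∀ j x, pd j f x = pd j f 0 := fun j x =>
    is_const_of_fderiv_eq_zero (differentiable_pd hf j)
      (fun y => continuousLinearMap_ext_single fun i => h y i j) x 0
  have hfd : Differentiable ℝ f := hf.differentiable two_ne_zero
  set L := fderiv ℝ f 0
  have hL : ∀ x, fderiv ℝ f x = L := fun x => continuousLinearMap_ext_single fun j => hpd j x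
  funext x
  have h := is_const_of_fderiv_eq_zero (hfd.sub L.differentiable)
    (fun y => by rw [fderiv_sub (hfd y) L.differentiableAt, hL y, L.fderiv, sub_self]) x 0
  simp only [Pi.sub_apply, map_zero, sub_zero] at h
  linarith

theorem forall_pd_pd_eq_zero_iff {f : (Fin n → ℝ) → ℝ} (hf : ContDiff ℝ 2 f) :
    (∀ x i j, pd i (pd j f) x = 0) ↔
      ∃ (a : ℝ) (L : (Fin n → ℝ) →L[ℝ] ℝ), f = fun x => a + L x := by
  refine ⟨fun h => ⟨_, _, eq_add_fderiv_of_pd_pd_eq_zero hf h⟩, ?_⟩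
  rintro ⟨a, L, rfl⟩
  exact pd_pd_eq_zero_of_hasFDerivAt fun x => L.hasFDerivAt.const_add a

end Flat

lemma exists_add_continuousLinearMap_iff_fin_two {f : (Fin 2 → ℝ) → ℝ} :
    (∃ (a : ℝ) (L : (Fin 2 → ℝ) →L[ℝ] ℝ), f = fun x => a + L x) ↔
      ∃ a b c : ℝ, f = fun x => a + b * x 0 + c * x 1 := by
  constructor
  · rintro ⟨a, L, rfl⟩
    refine ⟨a, L (Pi.single 0 1), L (Pi.single 1 1), funext fun x => ?_⟩
    have hx : x = x 0 • Pi.single 0 1 + x 1 • Pi.single 1 1 := by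
      ext k; fin_cases k <;> simp
    conv_lhs => rw [hx]
    simp only [map_add, map_smul, smul_eq_mul]
    ring
  · rintro ⟨a, b, c, rfl⟩
    refine ⟨a, b • ContinuousLinearMap.proj 0 + c • ContinuousLinearMap.proj 1, ?_⟩
    ext x
    simp [add_assoc]

/-- `Γᵢⱼᵏ = δᵢᵏ ωⱼ + δⱼᵏ ωᵢ` for `ω = x² dx¹`. -/
def deformedChristoffel : Fin 2 → Fin 2 → Fin 2 → (Fin 2 → ℝ) → ℝ := fun i j k x =>
  (if i = k then 1 else 0) * (if j = 0 then x 1 else 0)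
    + (if j = k then 1 else 0) * (if i = 0 then x 1 else 0)

lemma deformedChristoffel_eq (i j k : Fin 2) : deformedChristoffel i j k = fun x =>
    ((if i = k then 1 else 0) * (if j = 0 then 1 else 0)
      + (if j = k then 1 else 0) * (if i = 0 then 1 else 0)) * x 1 := by
  funext x
  simp only [deformedChristoffel]
  split_ifs <;> ring

lemma pd_const_mul_apply_one (l : Fin 2) (c : ℝ) (x : Fin 2 → ℝ) :
    pd l (fun y : Fin 2 → ℝ => c * y 1) x = if l = 1 then c else 0 := by
  have h : (fun y : Fin 2 → ℝ => c * y 1)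
      = ⇑(c • (ContinuousLinearMap.proj 1 : (Fin 2 → ℝ) →L[ℝ] ℝ)) := rfl
  rw [pd, h, ContinuousLinearMap.fderiv]
  fin_cases l <;> simp

lemma ricciS_deformedChristoffel_one_one (x : Fin 2 → ℝ) :
    ricciS deformedChristoffel 1 1 x = 0 := by
  simp only [ricciS, ricci, Fin.sum_univ_two, deformedChristoffel_eq, pd_const_mul_apply_one]
  norm_num

lemma ricciS_deformedChristoffel_zero_one (x : Fin 2 → ℝ) :
    ricciS deformedChristoffel 0 1 x = -1 / 2 := by
  simp only [ricciS, ricci, Fin.sum_univ_two, deformedChristoffel_eq, pd_const_mul_apply_one]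
  norm_num

lemma affHess_deformedChristoffel_one_one (f : (Fin 2 → ℝ) → ℝ) (x : Fin 2 → ℝ) :
    affHess deformedChristoffel f 1 1 x = pd 1 (pd 1 f) x := by
  simp [affHess, deformedChristoffel]

lemma affHess_deformedChristoffel_zero_one (f : (Fin 2 → ℝ) → ℝ) (x : Fin 2 → ℝ) :
    affHess deformedChristoffel f 0 1 x = pd 0 (pd 1 f) x - x 1 * pd 1 f x := by
  simp [affHess, deformedChristoffel]

/-- for the projective (non-strong) deformation of the flat connection on ℝ²
by ω = x²dx¹, the germ solution space of H_∇̃ f = -f ρ_{s,∇̃} at every point is zero,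
while for the flat connection the solution space of H_∇ f = 0 is Span{1, x¹, x²}. -/
theorem stmt8 (ω : Fin 2 → (Fin 2 → ℝ) → ℝ)
    (hω : ω = fun i x => if i = 0 then x 1 else 0)
    (Γt : Fin 2 → Fin 2 → Fin 2 → (Fin 2 → ℝ) → ℝ)
    (hΓt : Γt = fun i j k x =>
      (if i = k then 1 else 0) * ω j x + (if j = k then 1 else 0) * ω i x) :
    (∀ (P : Fin 2 → ℝ) (f : (Fin 2 → ℝ) → ℝ), ContDiff ℝ 2 f →
        (∀ᶠ x in nhds P, ∀ i j : Fin 2, affHess Γt f i j x = -(f x) * ricciS Γt i j x) →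
        ∀ᶠ x in nhds P, f x = 0)
    ∧ (∀ f : (Fin 2 → ℝ) → ℝ, ContDiff ℝ 2 f →
        ((∀ (x : Fin 2 → ℝ) (i j : Fin 2),
            affHess (fun _ _ _ _ => (0 : ℝ)) f i j x = 0)
          ↔ ∃ a b c : ℝ, f = fun x => a + b * x 0 + c * x 1)) := by
  have hΓ : Γt = deformedChristoffel := by subst hΓt hω; rfl
  subst hΓ
  refine ⟨fun P f hf hsol => ?_, fun f hf => ?_⟩
  · obtain ⟨ε, hε, hball⟩ := Metric.eventually_nhds_iff_ball.mp hsol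
    have h11 : ∀ z ∈ Metric.ball P ε, pd 1 (pd 1 f) z = 0 := fun z hz => by
      simpa [affHess_deformedChristoffel_one_one, ricciS_deformedChristoffel_one_one]
        using hball z hz 1 1
    have h01 : ∀ z ∈ Metric.ball P ε, pd 0 (pd 1 f) z - z 1 * pd 1 f z = f z / 2 :=
      fun z hz => by
        rw [← affHess_deformedChristoffel_zero_one, hball z hz 0 1,
          ricciS_deformedChristoffel_zero_one]
        ring
    filter_upwards [Metric.ball_mem_nhds P hε] with z hz
    exact eq_zero_of_pd_system Metric.isOpen_ball (convex_ball P ε) hf h11 h01 z hz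
  · have hflat : ∀ x i j, affHess (fun _ _ _ _ => (0 : ℝ)) f i j x = pd i (pd j f) x := by
      simp [affHess]
    simp only [hflat]
    rw [forall_pd_pd_eq_zero_iff hf, exists_add_continuousLinearMap_iff_fin_two]
end

section
/- On M = ℝ⁺ × ℝ, let ∇ have Christoffel symbols Γᵢⱼᵏ = (x¹)⁻¹Cᵢⱼᵏ with constants satisfying C₁₂¹ = C₂₂¹ = C₂₂² = 0 (components with upper index 2 otherwise arbitrary, C₁₁¹ ≠ -1). Then f(x¹,x²) = (x¹)^{C₁₁¹+1} satisfies H_∇ f = 0. -/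
/-!
A function `f = g(xᵐ)` of one coordinate has `∂ₖf = δₖₘ g'` and `∂ᵢ∂ⱼf = δᵢₘ δⱼₘ g''`, so
`(H_∇ f)ᵢⱼ = δᵢₘ δⱼₘ g'' - Γᵢⱼᵐ g'`. For `f = (x¹)^r` with `r = C₁₁¹ + 1` and `Γᵢⱼᵏ = Cᵢⱼᵏ / x¹`,
the hypotheses make `Γᵢⱼ¹` vanish off the diagonal entry `(1,1)`, and there
`g'' = r (r - 1) (x¹)^(r-2) = (C₁₁¹ / x¹) g'`.
-/

section CoordinateFunction

variable {n : ℕ} {g g' : ℝ → ℝ} {a g'' : ℝ} {m : Fin n} {x : Fin n → ℝ}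

lemma pd_congr_of_eventuallyEq {f₁ f₂ : (Fin n → ℝ) → ℝ} (i : Fin n) (h : f₁ =ᶠ[nhds x] f₂) :
    pd i f₁ x = pd i f₂ x := by
  simp only [pd, h.fderiv_eq]

lemma pd_comp_apply (k : Fin n) (hg : HasDerivAt g a (x m)) :
    pd k (fun y => g (y m)) x = a * (Pi.single k 1 : Fin n → ℝ) m := by
  have hf : HasFDerivAt (fun y : Fin n → ℝ => g (y m))
      (a • ContinuousLinearMap.proj (R := ℝ) (φ := fun _ : Fin n => ℝ) m) x :=
    hg.comp_hasFDerivAt x (hasFDerivAt_apply m x)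
  simp [pd, hf.fderiv]

lemma pd_pd_comp_apply (i k : Fin n) (hg : ∀ᶠ t in nhds (x m), HasDerivAt g (g' t) t)
    (hg' : HasDerivAt g' g'' (x m)) :
    pd i (pd k (fun y => g (y m))) x
      = g'' * (Pi.single k 1 : Fin n → ℝ) m * (Pi.single i 1 : Fin n → ℝ) m := by
  have hpd : pd k (fun y => g (y m)) =ᶠ[nhds x]
      fun y => g' (y m) * (Pi.single k 1 : Fin n → ℝ) m :=
    ((continuous_apply m).continuousAt.eventually hg).mono fun y hy => pd_comp_apply k hy
  rw [pd_congr_of_eventuallyEq i hpd,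
    pd_comp_apply (g := fun t => g' t * (Pi.single k 1 : Fin n → ℝ) m) i (hg'.mul_const _)]

lemma affHess_comp_apply (Γ : Fin n → Fin n → Fin n → (Fin n → ℝ) → ℝ) (i j : Fin n)
    (hg : ∀ᶠ t in nhds (x m), HasDerivAt g (g' t) t) (hg' : HasDerivAt g' g'' (x m)) :
    affHess Γ (fun y => g (y m)) i j x
      = g'' * (Pi.single j 1 : Fin n → ℝ) m * (Pi.single i 1 : Fin n → ℝ) m
        - Γ i j m x * g' (x m) := by
  simp [affHess, pd_pd_comp_apply i j hg hg', pd_comp_apply _ hg.self_of_nhds,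
    Pi.single_apply]

lemma affHess_rpow_apply (Γ : Fin n → Fin n → Fin n → (Fin n → ℝ) → ℝ) (i j : Fin n) (r : ℝ)
    (hx : 0 < x m) :
    affHess Γ (fun y => y m ^ r) i j x
      = r * ((r - 1) * x m ^ (r - 1 - 1)) * (Pi.single j 1 : Fin n → ℝ) m
          * (Pi.single i 1 : Fin n → ℝ) m
        - Γ i j m x * (r * x m ^ (r - 1)) := by
  refine affHess_comp_apply (g := (· ^ r)) (g' := fun t => r * t ^ (r - 1)) Γ i j ?_
    ((Real.hasDerivAt_rpow_const (Or.inl hx.ne')).const_mul r)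
  filter_upwards [lt_mem_nhds hx] with t ht
  exact Real.hasDerivAt_rpow_const (Or.inl ht.ne')

end CoordinateFunction

theorem stmt15_general (C : Fin 2 → Fin 2 → Fin 2 → ℝ)
    (hsym : ∀ i j k, C i j k = C j i k)
    (h2 : C 0 1 0 = 0) (h3 : C 1 1 0 = 0) :
    ∀ x : Fin 2 → ℝ, 0 < x 0 → ∀ i j : Fin 2,
      affHess (fun i j k x => C i j k / x 0)
        (fun y => y 0 ^ (C 0 0 0 + 1)) i j x = 0 := by
  intro x hx i j
  rw [affHess_rpow_apply _ i j _ hx, Real.rpow_sub_one hx.ne' (C 0 0 0 + 1 - 1)]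
  fin_cases i <;> fin_cases j <;> simp [h2, h3, hsym 1 0 0]
  field_simp
  ring

/-- Type B surface on ℝ⁺×ℝ with Γᵢⱼᵏ = (x¹)⁻¹Cᵢⱼᵏ, C₁₂¹ = C₂₂¹ = C₂₂² = 0
and C₁₁¹ ≠ -1: the function (x¹)^{C₁₁¹+1} satisfies H_∇ f = 0 on ℝ⁺×ℝ. -/
theorem stmt15 (C : Fin 2 → Fin 2 → Fin 2 → ℝ)
    (hsym : ∀ i j k, C i j k = C j i k)
    (h2 : C 0 1 0 = 0) (h3 : C 1 1 0 = 0) (h4 : C 1 1 1 = 0)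
    (h5 : C 0 0 0 ≠ -1) :
    ∀ x : Fin 2 → ℝ, 0 < x 0 → ∀ i j : Fin 2,
      affHess (fun i j k x => C i j k / x 0)
        (fun y => y 0 ^ (C 0 0 0 + 1)) i j x = 0 :=
  stmt15_general C hsym h2 h3
end

section
/- Let Γᵢⱼᵏ be smooth torsion-free Christoffel symbols on a neighborhood of 0 in ℝ², let μ ∈ ℝ, and let T > 1/3 and ε > 0 satisfy |Γᵢⱼᵏ(x)| ≤ T, |μ ρ_{s,ij}(x)| ≤ T on the ball B_ε(0), and ε < 1/(12T). Then any C² solution f of (H_∇ f)ᵢⱼ = μ f ρ_{s,ij} on B_ε(0) with f(0) = 0 and df(0) = 0 satisfies ‖f‖₁ ≤ 6εT‖f‖₁, where ‖f‖₁ := sup over B_ε(0) of max(|f|, |∂₁f|, |∂₂f|); consequently f ≡ 0 on B_ε(0). -/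
private lemma clm_apply_two (L : (Fin 2 → ℝ) →L[ℝ] ℝ) (v : Fin 2 → ℝ) :
    L v = v 0 * L (Pi.single 0 1) + v 1 * L (Pi.single 1 1) := by
  have hv : v = v 0 • (Pi.single 0 1 : Fin 2 → ℝ) + v 1 • (Pi.single 1 1 : Fin 2 → ℝ) := by
    funext j; fin_cases j <;> simp [Pi.single_apply]
  conv_lhs => rw [hv]
  simp [smul_eq_mul]

private lemma opnorm_le_two (L : (Fin 2 → ℝ) →L[ℝ] ℝ) :
    ‖L‖ ≤ |L (Pi.single 0 1)| + |L (Pi.single 1 1)| := by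
  apply ContinuousLinearMap.opNorm_le_bound _ (by positivity)
  intro v
  rw [clm_apply_two L v, Real.norm_eq_abs]
  calc |v 0 * L (Pi.single 0 1) + v 1 * L (Pi.single 1 1)|
      ≤ |v 0| * |L (Pi.single 0 1)| + |v 1| * |L (Pi.single 1 1)| := by
        refine (abs_add_le _ _).trans ?_; rw [abs_mul, abs_mul]
    _ ≤ ‖v‖ * |L (Pi.single 0 1)| + ‖v‖ * |L (Pi.single 1 1)| := by
        gcongr
        · exact (Real.norm_eq_abs _) ▸ norm_le_pi_norm v 0
        · exact (Real.norm_eq_abs _) ▸ norm_le_pi_norm v 1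
    _ = (|L (Pi.single 0 1)| + |L (Pi.single 1 1)|) * ‖v‖ := by ring
/-- energy estimate on a small ball: a C² solution of the quasi-Einstein
equation with f(0) = 0, df(0) = 0 satisfies ‖f‖₁ ≤ 6εT‖f‖₁, hence vanishes on B_ε(0). -/
theorem stmt17 (Γ : Fin 2 → Fin 2 → Fin 2 → (Fin 2 → ℝ) → ℝ)
    (hΓ : ∀ i j k, ContDiff ℝ (⊤ : ℕ∞) (Γ i j k))
    (hsym : ∀ i j k, Γ i j k = Γ j i k)
    (μ : ℝ) (T ε : ℝ) (hT : 1 / 3 < T) (hε : 0 < ε)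
    (hΓbd : ∀ x ∈ Metric.ball (0 : Fin 2 → ℝ) ε, ∀ i j k : Fin 2, |Γ i j k x| ≤ T)
    (hρbd : ∀ x ∈ Metric.ball (0 : Fin 2 → ℝ) ε, ∀ i j : Fin 2, |μ * ricciS Γ i j x| ≤ T)
    (hεT : ε < 1 / (12 * T))
    (f : (Fin 2 → ℝ) → ℝ) (hf : ContDiff ℝ 2 f)
    (hsol : ∀ x ∈ Metric.ball (0 : Fin 2 → ℝ) ε, ∀ i j : Fin 2,
      affHess Γ f i j x = μ * f x * ricciS Γ i j x)
    (h0 : f 0 = 0) (h1 : fderiv ℝ f 0 = 0)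
    (N : ℝ)
    (hN : N = sSup {y : ℝ | ∃ x ∈ Metric.ball (0 : Fin 2 → ℝ) ε,
      y = max |f x| (max |pd 0 f x| |pd 1 f x|)}) :
    N ≤ 6 * ε * T * N ∧ ∀ x ∈ Metric.ball (0 : Fin 2 → ℝ) ε, f x = 0 := by
  have hTpos : 0 < T := lt_trans (by norm_num) hT
  set S : Set ℝ := {y : ℝ | ∃ x ∈ Metric.ball (0 : Fin 2 → ℝ) ε,
      y = max |f x| (max |pd 0 f x| |pd 1 f x|)} with hS
  have hball0 : (0 : Fin 2 → ℝ) ∈ Metric.ball (0 : Fin 2 → ℝ) ε := by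
    simpa using hε
  -- regularity
  have hfd : Differentiable ℝ f := hf.differentiable (by norm_num)
  have hC1 : ContDiff ℝ 1 (fun x => fderiv ℝ f x) := hf.fderiv_right (by norm_num)
  have hpdC1 : ∀ j : Fin 2, ContDiff ℝ 1 (pd j f) := by
    intro j
    exact hC1.clm_apply contDiff_const
  have hpdcont : ∀ j : Fin 2, Continuous (pd j f) := fun j => (hpdC1 j).continuous
  -- boundedness of S
  have hSne : S.Nonempty := ⟨_, 0, hball0, rfl⟩
  have hBdd : BddAbove S := by
    have hgc : Continuous (fun x => max |f x| (max |pd 0 f x| |pd 1 f x|)) := by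
      exact (hf.continuous.abs.max ((hpdcont 0).abs.max (hpdcont 1).abs))
    have hK : IsCompact (Metric.closedBall (0 : Fin 2 → ℝ) ε) := isCompact_closedBall _ _
    have := (hK.image hgc).bddAbove
    refine this.mono ?_
    rintro y ⟨x, hx, rfl⟩
    exact ⟨x, Metric.ball_subset_closedBall hx, rfl⟩
  have hmemN : ∀ x ∈ Metric.ball (0 : Fin 2 → ℝ) ε,
      max |f x| (max |pd 0 f x| |pd 1 f x|) ≤ N := by
    intro x hx; rw [hN]; exact le_csSup hBdd ⟨x, hx, rfl⟩
  have hfN : ∀ x ∈ Metric.ball (0 : Fin 2 → ℝ) ε, |f x| ≤ N := fun x hx =>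
    le_trans (le_max_left _ _) (hmemN x hx)
  have hpdN : ∀ x ∈ Metric.ball (0 : Fin 2 → ℝ) ε, ∀ i : Fin 2, |pd i f x| ≤ N := by
    intro x hx i
    fin_cases i
    · exact le_trans (le_trans (le_max_left _ _) (le_max_right _ _)) (hmemN x hx)
    · exact le_trans (le_trans (le_max_right _ _) (le_max_right _ _)) (hmemN x hx)
  have hN0 : 0 ≤ N := le_trans (abs_nonneg (f 0)) (le_trans (le_max_left _ _) (hmemN 0 hball0))
  -- second derivative bound
  have hhess : ∀ y ∈ Metric.ball (0 : Fin 2 → ℝ) ε, ∀ i j : Fin 2,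
      |pd i (pd j f) y| ≤ 3 * T * N := by
    intro y hy i j
    have heq : pd i (pd j f) y =
        Γ i j 0 y * pd 0 f y + Γ i j 1 y * pd 1 f y + f y * (μ * ricciS Γ i j y) := by
      have := hsol y hy i j
      simp only [affHess, Fin.sum_univ_two] at this
      linarith [this]
    rw [heq]
    have h1' := hΓbd y hy i j 0
    have h2' := hΓbd y hy i j 1
    have h3' := hρbd y hy i j
    calc |Γ i j 0 y * pd 0 f y + Γ i j 1 y * pd 1 f y + f y * (μ * ricciS Γ i j y)|
        ≤ |Γ i j 0 y| * |pd 0 f y| + |Γ i j 1 y| * |pd 1 f y| + |f y| * |μ * ricciS Γ i j y| := by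
          refine (abs_add_le _ _).trans ?_
          gcongr
          · refine (abs_add_le _ _).trans ?_; rw [abs_mul, abs_mul]
          · rw [abs_mul]
      _ ≤ T * N + T * N + N * T := by
          gcongr <;> first
            | exact h1' | exact h2' | exact h3' | exact hpdN y hy 0 | exact hpdN y hy 1
            | exact hfN y hy | exact abs_nonneg _ | exact hN0.trans' le_rfl
      _ = 3 * T * N := by ring
  -- gradient bound on the ball
  have hgradbd : ∀ y ∈ Metric.ball (0 : Fin 2 → ℝ) ε, ‖fderiv ℝ f y‖ ≤ 2 * N := by
    intro y hy
    refine (opnorm_le_two _).trans ?_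
    have e0 : fderiv ℝ f y (Pi.single 0 1) = pd 0 f y := rfl
    have e1 : fderiv ℝ f y (Pi.single 1 1) = pd 1 f y := rfl
    rw [e0, e1]
    linarith [hpdN y hy 0, hpdN y hy 1]
  have hconv : Convex ℝ (Metric.ball (0 : Fin 2 → ℝ) ε) := convex_ball 0 ε
  -- |f x| ≤ 2 N ε
  have hfbd : ∀ x ∈ Metric.ball (0 : Fin 2 → ℝ) ε, |f x| ≤ 2 * N * ε := by
    intro x hx
    have := hconv.norm_image_sub_le_of_norm_fderiv_le
      (fun y _ => hfd y) hgradbd hball0 hx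
    rw [h0, sub_zero, sub_zero, Real.norm_eq_abs] at this
    refine this.trans ?_
    have hxε : ‖x‖ ≤ ε := le_of_lt (by simpa [Metric.mem_ball] using hx)
    have : 0 ≤ 2 * N := by linarith
    nlinarith [norm_nonneg x]
  -- |pd j f x| ≤ 6 T N ε
  have hpdbd : ∀ x ∈ Metric.ball (0 : Fin 2 → ℝ) ε, ∀ j : Fin 2,
      |pd j f x| ≤ 6 * T * N * ε := by
    intro x hx j
    have hDbd : ∀ y ∈ Metric.ball (0 : Fin 2 → ℝ) ε, ‖fderiv ℝ (pd j f) y‖ ≤ 6 * T * N := by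
      intro y hy
      refine (opnorm_le_two _).trans ?_
      have e0 : fderiv ℝ (pd j f) y (Pi.single 0 1) = pd 0 (pd j f) y := rfl
      have e1 : fderiv ℝ (pd j f) y (Pi.single 1 1) = pd 1 (pd j f) y := rfl
      rw [e0, e1]
      linarith [hhess y hy 0 j, hhess y hy 1 j]
    have hpd0 : pd j f 0 = 0 := by
      simp [pd, h1]
    have := hconv.norm_image_sub_le_of_norm_fderiv_le
      (fun y _ => ((hpdC1 j).differentiable one_ne_zero) y) hDbd hball0 hx
    rw [hpd0, sub_zero, sub_zero, Real.norm_eq_abs] at this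
    refine this.trans ?_
    have hxε : ‖x‖ ≤ ε := le_of_lt (by simpa [Metric.mem_ball] using hx)
    have h6TN : 0 ≤ 6 * T * N := by positivity
    nlinarith [norm_nonneg x]
  -- conclude part 1
  have hpart1 : N ≤ 6 * ε * T * N := by
    have hub : ∀ y ∈ S, y ≤ 6 * ε * T * N := by
      rintro y ⟨x, hx, rfl⟩
      have h1b : |f x| ≤ 6 * ε * T * N := by
        refine (hfbd x hx).trans ?_
        have key : 0 ≤ N * ε * (T - 1/3) :=
          mul_nonneg (mul_nonneg hN0 hε.le) (by linarith)
        nlinarith [key]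
      have h2b : |pd 0 f x| ≤ 6 * ε * T * N := by
        refine (hpdbd x hx 0).trans (le_of_eq (by ring))
      have h3b : |pd 1 f x| ≤ 6 * ε * T * N := by
        refine (hpdbd x hx 1).trans (le_of_eq (by ring))
      exact max_le h1b (max_le h2b h3b)
    have := csSup_le hSne hub
    rwa [← hN] at this
  refine ⟨hpart1, ?_⟩
  have hNzero : N = 0 := by
    have h12 : 0 < 12 * T := by linarith
    have : ε * (12 * T) < 1 := by
      have := (lt_div_iff₀ h12).mp hεT
      linarith
    nlinarith
  intro x hx
  have := hfN x hx
  rw [hNzero] at this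
  exact abs_eq_zero.mp (le_antisymm this (abs_nonneg _))
end
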